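/- arXiv:math/0301255 — 11 statements merged into one kernel-verified Lean document; each statement's English description precedes it below -/
import Mathlib

section
/- The contraction axiom fails over the reals without nonnegativity: there exists a real table p : Fin 2 × Fin 2 × Fin 2 → ℝ such that for each k the matrix (i,j) ↦ p(i,j,k) has all 2×2 minors zero, and the marginal matrix (j,k) ↦ p(0,j,k)+p(1,j,k) has all 2×2 minors zero, yet the 2×4 flattening with rows indexed by j and columns indexed by (i,k) has a nonzero 2×2 minor. -/
/-!
Take every slice `p(·,·,k) = a k ⊗ b k` of rank one, so `1 ⫫ 2 | 3` holds. The marginal is then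
`p₊(j,k) = (∑ i, a k i) * b k j`; choosing `a 0` with coordinate sum zero kills the marginal's first column,
so `2 ⫫ 3` holds as well. The flattening still contains the columns `b 0` and `b 1`, and these can
be taken independent. For nonnegative tables this cannot happen: a nonnegative `a 0` summing to
zero vanishes.
-/

def outerSlices {R ι ι' κ : Type*} [Mul R] (a : κ → ι → R) (b : κ → ι' → R) : ι × ι' × κ → R :=
  fun x => a x.2.2 x.1 * b x.2.2 x.2.1

section OuterSlices

variable {R ι ι' κ : Type*} [CommRing R] (a : κ → ι → R) (b : κ → ι' → R)

theorem outerSlices_slice_minor_eq_zero (i r : ι) (j s : ι') (k : κ) :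
    outerSlices a b (i, j, k) * outerSlices a b (r, s, k) -
      outerSlices a b (i, s, k) * outerSlices a b (r, j, k) = 0 := by
  simp only [outerSlices]
  ring

theorem sum_outerSlices [Fintype ι] (j : ι') (k : κ) :
    ∑ i, outerSlices a b (i, j, k) = (∑ i, a k i) * b k j := by
  rw [Finset.sum_mul]
  rfl

theorem outerSlices_flattening_minor (i : ι) (j s : ι') (k t : κ) :
    outerSlices a b (i, j, k) * outerSlices a b (i, s, t) -
      outerSlices a b (i, j, t) * outerSlices a b (i, s, k) =
        a k i * a t i * (b k j * b t s - b t j * b k s) := by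
  simp only [outerSlices]
  ring

end OuterSlices

theorem minor_eq_zero_of_forall_col_zero_eq_zero {R ι : Type*} [CommRing R]
    (m : ι → Fin 2 → R) (hm : ∀ j, m j 0 = 0) (j s : ι) (k t : Fin 2) :
    m j k * m s t - m j t * m s k = 0 := by
  fin_cases k <;> fin_cases t <;> simp [hm]

/-- The contraction axiom fails over the reals without nonnegativity:
there is a real `2 × 2 × 2` table satisfying `1 ⫫ 2 | 3` and `2 ⫫ 3`
(all relevant `2 × 2` minors vanish) but not `2 ⫫ {1,3}`
(some `2 × 2` minor of the `2 × 4` flattening is nonzero). -/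
theorem contraction_fails_over_reals :
    ∃ p : Fin 2 × Fin 2 × Fin 2 → ℝ,
      (∀ i r j s : Fin 2, ∀ k : Fin 2,
        p (i, j, k) * p (r, s, k) - p (i, s, k) * p (r, j, k) = 0) ∧
      (∀ j s k t : Fin 2,
        (∑ i, p (i, j, k)) * (∑ i, p (i, s, t)) -
          (∑ i, p (i, j, t)) * (∑ i, p (i, s, k)) = 0) ∧
      (∃ (j s : Fin 2) (ik rt : Fin 2 × Fin 2),
        p (ik.1, j, ik.2) * p (rt.1, s, rt.2) -
          p (rt.1, j, rt.2) * p (ik.1, s, ik.2) ≠ 0) := by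
  let a : Fin 2 → Fin 2 → ℝ := ![![1, -1], ![1, 0]]
  let b : Fin 2 → Fin 2 → ℝ := ![![1, 2], ![1, 0]]
  refine ⟨outerSlices a b, outerSlices_slice_minor_eq_zero a b, fun j s k t => ?_,
    0, 1, (0, 0), (0, 1), ?_⟩
  · simp only [sum_outerSlices]
    exact minor_eq_zero_of_forall_col_zero_eq_zero (fun j k => (∑ i, a k i) * b k j)
      (fun j => by simp [a]) j s k t
  · rw [outerSlices_flattening_minor]
    norm_num [a, b]
end

section
/- Let p : Fin d1 × Fin d2 × Fin d3 → ℂ satisfy: for each k the slice p(·,·,k) has all 2×2 minors zero, and the marginal matrix p₊(j,k) = ∑_i p(i,j,k) has all 2×2 minors zero. Suppose moreover that for every j and k, p₊(j,k) ≠ 0. Then the d2 × (d1·d3) flattening (j,(i,k)) ↦ p(i,j,k) has all 2×2 minors zero. -/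
/-! Summing the vanishing minors of the slice `p(·,·,k)` over one row index gives
`p(i,j,k) p₊(s,k) = p(i,s,k) p₊(j,k)`: within each slice, column `j` is the multiple
`p₊(j,k) / p₊(s,k)` of column `s`. The vanishing minors of `p₊` say that this ratio does not
depend on `k`, so row `j` of the flattening is a multiple of row `s`. -/

open Finset

theorem mul_sum_eq_mul_sum_of_minors_eq_zero {ι κ R : Type*} [Fintype ι] [CommRing R]
    (M : ι → κ → R) (hM : ∀ (i r : ι) (j s : κ), M i j * M r s - M i s * M r j = 0)
    (i : ι) (j s : κ) :
    M i j * ∑ r, M r s = M i s * ∑ r, M r j := by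
  rw [mul_sum, mul_sum]
  exact sum_congr rfl fun r _ => by linear_combination hM i r j s

/-- Over the complex numbers, the contraction axiom holds for tables all of
whose marginals `p₊(j,k) = ∑ i, p(i,j,k)` are nonzero. -/
theorem contraction_complex_nonzero_marginals (d1 d2 d3 : ℕ)
    (p : Fin d1 × Fin d2 × Fin d3 → ℂ)
    (h12 : ∀ (i r : Fin d1) (j s : Fin d2) (k : Fin d3),
      p (i, j, k) * p (r, s, k) - p (i, s, k) * p (r, j, k) = 0)
    (h23 : ∀ (j s : Fin d2) (k t : Fin d3),
      (∑ i, p (i, j, k)) * (∑ i, p (i, s, t)) -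
        (∑ i, p (i, j, t)) * (∑ i, p (i, s, k)) = 0)
    (hnz : ∀ (j : Fin d2) (k : Fin d3), (∑ i, p (i, j, k)) ≠ 0) :
    ∀ (j s : Fin d2) (ik rt : Fin d1 × Fin d3),
      p (ik.1, j, ik.2) * p (rt.1, s, rt.2) -
        p (rt.1, j, rt.2) * p (ik.1, s, ik.2) = 0 := by
  rintro j s ⟨i, k⟩ ⟨r, t⟩
  have hslice : ∀ i j s k, p (i, j, k) * ∑ r, p (r, s, k) = p (i, s, k) * ∑ r, p (r, j, k) :=
    fun i j s k => mul_sum_eq_mul_sum_of_minors_eq_zero (fun i j => p (i, j, k))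
      (fun i r j s => h12 i r j s k) i j s
  have hcleared : (p (i, j, k) * p (r, s, t) - p (r, j, t) * p (i, s, k)) *
      (∑ x, p (x, s, k)) * (∑ x, p (x, s, t)) = 0 := by
    linear_combination (p (r, s, t) * ∑ x, p (x, s, t)) * hslice i j s k
      - (p (i, s, k) * ∑ x, p (x, s, k)) * hslice r j s t
      + (p (i, s, k) * p (r, s, t)) * h23 j s k t
  simpa [hnz s k, hnz s t] using hcleared
end

section
/- A 2×4 real matrix M with nonnegative entries summing to 1 has rank at most 1 if and only if there exist q₁, q₂₁, q₂₂, q₃ ∈ [0,1] such that, indexing columns by pairs (u₂,u₃) ∈ Fin 2 × Fin 2, M(1,(u₂,u₃)) = q₁ · r(u₂,u₃), M(2,(u₂,u₃)) = (1−q₁) · r(u₂,u₃), where r(u₂,u₃) = (if u₂=1 then s(u₃) else 1−s(u₃)) · (if u₃=1 then q₃ else 1−q₃) with s(1)=q₂₁, s(2)=q₂₂. -/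
/-!
A rank-one matrix of total mass `1` is the outer product of its row and column marginals,
since `M i u * ∑ M = (∑_u' M i u') * (∑_i' M i' u)` holds for every outer product.
The column marginal, a distribution of `(u₂, u₃)`, factors as the marginal of `u₃` times the
conditional of `u₂` given `u₃`; where the marginal of `u₃` vanishes the conditional is arbitrary.
-/

open Matrix Finset

theorem Matrix.exists_eq_vecMulVec_of_rank_le_one {K m n : Type*} [Field K] [Fintype m]
    [Fintype n] (M : Matrix m n K) (h : M.rank ≤ 1) :
    ∃ (v : m → K) (w : n → K), M = vecMulVec v w := by
  rw [rank_eq_finrank_span_cols] at h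
  obtain ⟨v, hv⟩ := finrank_le_one_iff.mp h
  choose w hw using fun j : n => hv ⟨Mᵀ j, Submodule.subset_span (Set.mem_range_self j)⟩
  refine ⟨v, w, ext fun i j => ?_⟩
  have hcol := congrFun (congrArg Subtype.val (hw j)) i
  simp only [SetLike.val_smul, Pi.smul_apply, transpose_apply, smul_eq_mul] at hcol
  rw [vecMulVec_apply, ← hcol, mul_comm]

theorem Matrix.vecMulVec_apply_mul_sum {R m n : Type*} [CommSemiring R] [Fintype m]
    [Fintype n] (v : m → R) (w : n → R) (i : m) (j : n) :
    vecMulVec v w i j * ∑ k, ∑ l, vecMulVec v w k l =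
      (∑ l, vecMulVec v w i l) * ∑ k, vecMulVec v w k j := by
  simp only [vecMulVec_apply, ← mul_sum, ← sum_mul]
  ring

theorem Matrix.eq_sum_mul_sum_of_rank_le_one {K m n : Type*} [Field K] [Fintype m] [Fintype n]
    (M : Matrix m n K) (h : M.rank ≤ 1) (hsum : ∑ i, ∑ j, M i j = 1) (i : m) (j : n) :
    M i j = (∑ j', M i j') * ∑ i', M i' j := by
  obtain ⟨v, w, rfl⟩ := M.exists_eq_vecMulVec_of_rank_le_one h
  rw [← vecMulVec_apply_mul_sum, hsum, mul_one]

def binaryDist (p : ℝ) (u : Fin 2) : ℝ := if u = 0 then p else 1 - p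

@[simp]
theorem binaryDist_zero (p : ℝ) : binaryDist p 0 = p := rfl

@[simp]
theorem binaryDist_one (p : ℝ) : binaryDist p 1 = 1 - p := rfl

theorem exists_eq_binaryDist_mul_sum (f : Fin 2 → ℝ) (hf : ∀ u, 0 ≤ f u) :
    ∃ p ∈ Set.Icc (0 : ℝ) 1, ∀ u, f u = binaryDist p u * ∑ v, f v := by
  simp only [Fin.sum_univ_two, Fin.forall_fin_two, binaryDist_zero, binaryDist_one]
  have h0 := hf 0
  have h1 := hf 1
  rcases (add_nonneg h0 h1).eq_or_lt with htot | htot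
  · exact ⟨0, ⟨le_rfl, zero_le_one⟩, by constructor <;> linarith⟩
  · refine ⟨f 0 / (f 0 + f 1), ⟨by positivity, (div_le_one htot).mpr (by linarith)⟩, ?_, ?_⟩
    · field_simp
    · field_simp
      ring

theorem exists_eq_binaryDist_mul_binaryDist (c : Fin 2 × Fin 2 → ℝ) (hc : ∀ u, 0 ≤ c u)
    (hsum : ∑ u, c u = 1) :
    ∃ q ∈ Set.Icc (0 : ℝ) 1, ∃ s : Fin 2 → ℝ, (∀ u, s u ∈ Set.Icc (0 : ℝ) 1) ∧
      ∀ u2 u3, c (u2, u3) = binaryDist (s u3) u2 * binaryDist q u3 := by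
  set t : Fin 2 → ℝ := fun u3 => ∑ u2, c (u2, u3)
  have ht : ∑ u3, t u3 = 1 := by rw [← hsum, Fintype.sum_prod_type_right]
  obtain ⟨q, hq, htq⟩ := exists_eq_binaryDist_mul_sum t fun u3 => sum_nonneg fun u2 _ => hc _
  choose s hs hcs using fun u3 =>
    exists_eq_binaryDist_mul_sum (fun u2 => c (u2, u3)) fun u2 => hc _
  refine ⟨q, hq, s, hs, fun u2 u3 => ?_⟩
  rw [hcs u3 u2, ← mul_one (binaryDist q u3), ← ht, ← htq u3]

/-- Rows are indexed by the value of `X₁` and columns by pairs `(u₂, u₃)`; `0 : Fin 2` plays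
the role of the level "1" and `1 : Fin 2` that of the level "2". -/
theorem factorization_three_binary (M : Matrix (Fin 2) (Fin 2 × Fin 2) ℝ)
    (hnn : ∀ i u, 0 ≤ M i u) (hsum : ∑ i, ∑ u, M i u = 1) :
    M.rank ≤ 1 ↔
      ∃ (q1 q3 : ℝ) (s : Fin 2 → ℝ),
        q1 ∈ Set.Icc (0 : ℝ) 1 ∧ q3 ∈ Set.Icc (0 : ℝ) 1 ∧
        (∀ u, s u ∈ Set.Icc (0 : ℝ) 1) ∧
        ∀ u2 u3 : Fin 2,
          M 0 (u2, u3) =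
            q1 * ((if u2 = 0 then s u3 else 1 - s u3) *
              (if u3 = 0 then q3 else 1 - q3)) ∧
          M 1 (u2, u3) =
            (1 - q1) * ((if u2 = 0 then s u3 else 1 - s u3) *
              (if u3 = 0 then q3 else 1 - q3)) := by
  constructor
  · intro h
    obtain ⟨q1, hq1, hrow⟩ := exists_eq_binaryDist_mul_sum (fun i => ∑ u, M i u)
      fun i => sum_nonneg fun u _ => hnn i u
    obtain ⟨q3, hq3, s, hs, hcol⟩ := exists_eq_binaryDist_mul_binaryDist (fun u => ∑ i, M i u)
      (fun u => sum_nonneg fun i _ => hnn i u) (by rw [sum_comm, hsum])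
    refine ⟨q1, q3, s, hq1, hq3, hs, fun u2 u3 => ⟨?_, ?_⟩⟩ <;>
      rw [M.eq_sum_mul_sum_of_rank_le_one h hsum, hrow, hsum, mul_one, hcol] <;> rfl
  · rintro ⟨q1, q3, s, -, -, -, hM⟩
    have : M = vecMulVec (binaryDist q1) fun u => binaryDist (s u.2) u.1 * binaryDist q3 u.2 := by
      ext i ⟨u2, u3⟩
      fin_cases i
      exacts [(hM u2 u3).1, (hM u2 u3).2]
    exact this ▸ rank_vecMulVec_le _ _
end

section
/- There exists a nonnegative real 4×4 matrix M of rank 3 such that M cannot be written as a sum of 3 matrices each of which is nonnegative and of rank at most 1. -/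
open Matrix Finset

private noncomputable def Mex : Matrix (Fin 4) (Fin 4) ℝ :=
  !![1,1,0,0; 0,1,1,0; 0,0,1,1; 1,0,0,1]

private noncomputable def N3 : Matrix (Fin 4) (Fin 3) ℝ := !![1,1,0; 0,1,1; 0,0,1; 1,0,0]
private noncomputable def P3 : Matrix (Fin 3) (Fin 4) ℝ := !![1,0,0,1; 0,1,0,-1; 0,0,1,1]

private def pos8 (t : Fin 8) : Fin 4 × Fin 4 :=
  match t.val with
  | 0 => (0,0) | 1 => (0,1) | 2 => (1,1) | 3 => (1,2)
  | 4 => (2,2) | 5 => (2,3) | 6 => (3,3) | _ => (3,0)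

private def adjB : Fin 8 → Fin 8 → Bool := fun t u =>
  decide (t = u ∨ (t.val + 1) % 8 = u.val ∨ (u.val + 1) % 8 = t.val)

private lemma le_rank_of_li {n s : ℕ} (A : Matrix (Fin n) (Fin n) ℝ)
    (v : Fin s → Fin n) (h : LinearIndependent ℝ (fun t => fun i => A i (v t))) :
    s ≤ A.rank := by
  have hmem : ∀ t, (fun i => A i (v t)) ∈ LinearMap.range A.mulVecLin := by
    intro t
    refine ⟨Pi.single (v t) 1, ?_⟩
    ext i
    simp [Matrix.mulVecLin, Matrix.mulVec, dotProduct, Pi.single_apply]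
  have hspan : Submodule.span ℝ (Set.range fun t => fun i => A i (v t)) ≤
      LinearMap.range A.mulVecLin := by
    rw [Submodule.span_le]; rintro _ ⟨t, rfl⟩; exact hmem t
  calc s = Module.finrank ℝ
        (Submodule.span ℝ (Set.range fun t => fun i => A i (v t))) := by
        rw [finrank_span_eq_card h, Fintype.card_fin]
    _ ≤ Module.finrank ℝ (LinearMap.range A.mulVecLin) := Submodule.finrank_mono hspan
    _ = A.rank := rfl

private lemma cross_of_rank_le_one (X : Matrix (Fin 4) (Fin 4) ℝ) (hr : X.rank ≤ 1)
    (i j k l : Fin 4) : X i j * X k l = X i l * X k j := by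
  by_contra hne
  have hli : LinearIndependent ℝ (fun t => fun i' => X i' ((![j, l] : Fin 2 → Fin 4) t)) := by
    rw [Fintype.linearIndependent_iff]
    intro g hg t
    have h1 : g 0 * X i j + g 1 * X i l = 0 := by
      have := congrFun hg i
      simpa [Fin.sum_univ_two] using this
    have h2 : g 0 * X k j + g 1 * X k l = 0 := by
      have := congrFun hg k
      simpa [Fin.sum_univ_two] using this
    have hd : X i j * X k l - X i l * X k j ≠ 0 := sub_ne_zero.mpr hne
    have hg0 : g 0 = 0 := by
      have h : g 0 * (X i j * X k l - X i l * X k j) = 0 := by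
        linear_combination X k l * h1 - X i l * h2
      rcases mul_eq_zero.mp h with h | h
      · exact h
      · exact absurd h hd
    have hg1 : g 1 = 0 := by
      have h : g 1 * (X i j * X k l - X i l * X k j) = 0 := by
        linear_combination X i j * h2 - X k j * h1
      rcases mul_eq_zero.mp h with h | h
      · exact h
      · exact absurd h hd
    fin_cases t <;> assumption
  have := le_rank_of_li X ![j, l] hli
  omega

private lemma Mex_rank : Mex.rank = 3 := by
  have hfact : Mex = N3 * P3 := by
    ext i j
    fin_cases i <;> fin_cases j <;>
      norm_num [Mex, N3, P3, Matrix.mul_apply, Fin.sum_univ_three, Matrix.vecHead, Matrix.vecTail, Matrix.cons_val_two]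
  have hle : Mex.rank ≤ 3 := by
    rw [hfact]
    calc (N3 * P3).rank ≤ N3.rank := Matrix.rank_mul_le_left N3 P3
      _ ≤ Fintype.card (Fin 3) := Matrix.rank_le_card_width N3
      _ = 3 := by simp
  have hge : 3 ≤ Mex.rank := by
    apply le_rank_of_li Mex ![0, 1, 2]
    rw [Fintype.linearIndependent_iff]
    intro g hg t
    have e0 := congrFun hg 0
    have e1 := congrFun hg 1
    have e2 := congrFun hg 2
    simp [Fin.sum_univ_three, Mex] at e0 e1 e2
    have hg0 : g 0 = 0 := by linarith
    have hg1 : g 1 = 0 := by linarith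
    have hg2 : g 2 = 0 := by linarith
    fin_cases t <;> assumption
  omega

private lemma zcross : ∀ t u : Fin 8, adjB t u = false →
    Mex (pos8 t).1 (pos8 u).2 = 0 ∨ Mex (pos8 u).1 (pos8 t).2 = 0 := by
  intro t u h
  fin_cases t <;> fin_cases u <;> simp_all [adjB, pos8, Mex, Matrix.vecHead, Matrix.vecTail]

private lemma triangle : ∀ a b c : Fin 8, a ≠ b → a ≠ c → b ≠ c →
    adjB a b = true → adjB a c = true → adjB b c = true → False := by decide

/-- Nonnegative rank can exceed rank: there is a nonnegative real `4 × 4`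
matrix of rank `3` which is not a sum of three nonnegative matrices of
rank at most `1`. -/
theorem nonneg_rank_exceeds_rank :
    ∃ M : Matrix (Fin 4) (Fin 4) ℝ,
      (∀ i j, 0 ≤ M i j) ∧ M.rank = 3 ∧
      ¬ ∃ A B C : Matrix (Fin 4) (Fin 4) ℝ,
          (∀ i j, 0 ≤ A i j) ∧ (∀ i j, 0 ≤ B i j) ∧ (∀ i j, 0 ≤ C i j) ∧
          A.rank ≤ 1 ∧ B.rank ≤ 1 ∧ C.rank ≤ 1 ∧
          M = A + B + C := by
  refine ⟨Mex, ?_, Mex_rank, ?_⟩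
  · intro i j; fin_cases i <;> fin_cases j <;> norm_num [Mex]
  · rintro ⟨A, B, C, hA, hB, hC, hA1, hB1, hC1, hM⟩
    have hsum : ∀ i j, Mex i j = A i j + B i j + C i j := by
      intro i j; rw [hM]; simp [Matrix.add_apply]
    have hzA : ∀ i j, Mex i j = 0 → A i j = 0 := by
      intro i j h; have := hsum i j; have := hA i j; have := hB i j; have := hC i j; linarith
    have hzB : ∀ i j, Mex i j = 0 → B i j = 0 := by
      intro i j h; have := hsum i j; have := hA i j; have := hB i j; have := hC i j; linarith
    have hzC : ∀ i j, Mex i j = 0 → C i j = 0 := by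
      intro i j h; have := hsum i j; have := hA i j; have := hB i j; have := hC i j; linarith
    have key : ∀ X : Matrix (Fin 4) (Fin 4) ℝ, (∀ i j, 0 ≤ X i j) → X.rank ≤ 1 →
        (∀ i j, Mex i j = 0 → X i j = 0) →
        (Finset.univ.filter (fun t => 0 < X (pos8 t).1 (pos8 t).2)).card ≤ 2 := by
      intro X hXpos hXr hXz
      have pair : ∀ t u : Fin 8, 0 < X (pos8 t).1 (pos8 t).2 →
          0 < X (pos8 u).1 (pos8 u).2 → adjB t u = true := by
        intro t u h1 h2
        by_contra hadj
        have hf : adjB t u = false := by simpa using hadj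
        have hc := cross_of_rank_le_one X hXr (pos8 t).1 (pos8 t).2 (pos8 u).1 (pos8 u).2
        have hp : 0 < X (pos8 t).1 (pos8 u).2 * X (pos8 u).1 (pos8 t).2 := by
          rw [← hc]; exact mul_pos h1 h2
        rcases zcross t u hf with h | h
        · rw [hXz _ _ h] at hp; simp at hp
        · rw [hXz _ _ h] at hp; simp at hp
      by_contra hcard
      push_neg at hcard
      rw [Finset.two_lt_card_iff] at hcard
      obtain ⟨a, b, c, ha, hb, hc, hab, hac, hbc⟩ := hcard
      rw [Finset.mem_filter] at ha hb hc
      exact triangle a b c hab hac hbc (pair a b ha.2 hb.2) (pair a c ha.2 hc.2)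
        (pair b c hb.2 hc.2)
    have hcover : ∀ t : Fin 8, 0 < A (pos8 t).1 (pos8 t).2 ∨
        0 < B (pos8 t).1 (pos8 t).2 ∨ 0 < C (pos8 t).1 (pos8 t).2 := by
      intro t
      have hMpos : 0 < Mex (pos8 t).1 (pos8 t).2 := by
        fin_cases t <;> norm_num [pos8, Mex, Matrix.vecHead, Matrix.vecTail, Matrix.cons_val_two, Matrix.cons_val_three]
      by_contra hcon
      push_neg at hcon
      obtain ⟨h1, h2, h3⟩ := hcon
      have := hsum (pos8 t).1 (pos8 t).2
      have := hA (pos8 t).1 (pos8 t).2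
      have := hB (pos8 t).1 (pos8 t).2
      have := hC (pos8 t).1 (pos8 t).2
      linarith
    have h8 : (8 : ℕ) ≤ 6 := by
      have hsub : (Finset.univ : Finset (Fin 8)) ⊆
          Finset.univ.filter (fun t => 0 < A (pos8 t).1 (pos8 t).2) ∪
          Finset.univ.filter (fun t => 0 < B (pos8 t).1 (pos8 t).2) ∪
          Finset.univ.filter (fun t => 0 < C (pos8 t).1 (pos8 t).2) := by
        intro t _
        simp only [Finset.mem_union, Finset.mem_filter, Finset.mem_univ, true_and]
        rcases hcover t with h | h | h <;> tauto
      have c1 := Finset.card_le_card hsub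
      have c2 := Finset.card_union_le
        (Finset.univ.filter (fun t => 0 < A (pos8 t).1 (pos8 t).2) ∪
         Finset.univ.filter (fun t => 0 < B (pos8 t).1 (pos8 t).2))
        (Finset.univ.filter (fun t => 0 < C (pos8 t).1 (pos8 t).2))
      have c3 := Finset.card_union_le
        (Finset.univ.filter (fun t => 0 < A (pos8 t).1 (pos8 t).2))
        (Finset.univ.filter (fun t => 0 < B (pos8 t).1 (pos8 t).2))
      have kA := key A hA hA1 hzA
      have kB := key B hB hB1 hzB
      have kC := key C hC hC1 hzC
      have huniv : (Finset.univ : Finset (Fin 8)).card = 8 := by simp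
      omega
    omega
end

section
/- Let A, B, C be n×n matrices over a commutative ring, with n=3. If the 3-dimensional tensor T given by T(i,j,1)=A(i,j), T(i,j,2)=B(i,j), T(i,j,3)=C(i,j) is a sum of at most 3 rank-one tensors, then A · adj(B) · C − C · adj(B) · A = 0, where adj denotes the adjugate matrix. -/
/-- Strassen's commutation equations: if the `3 × 3 × 3` tensor with slices
`A`, `B`, `C` is a sum of at most three rank-one tensors, then
`A · adj(B) · C − C · adj(B) · A = 0`. -/
theorem strassen_rank_three {R : Type*} [CommRing R]
    (x y z : Fin 3 → Fin 3 → R) (A B C : Matrix (Fin 3) (Fin 3) R)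
    (hA : ∀ i j, A i j = ∑ m : Fin 3, x m i * y m j * z m 0)
    (hB : ∀ i j, B i j = ∑ m : Fin 3, x m i * y m j * z m 1)
    (hC : ∀ i j, C i j = ∑ m : Fin 3, x m i * y m j * z m 2) :
    A * B.adjugate * C - C * B.adjugate * A = 0 := by
  ext i j
  simp only [Matrix.sub_apply, Matrix.zero_apply, Matrix.mul_apply,
    Matrix.adjugate_fin_three, Fin.sum_univ_three, hA, hB, hC,
    Matrix.of_apply, Matrix.cons_val', Matrix.cons_val_zero, Matrix.cons_val_one,
    Matrix.head_cons, Matrix.empty_val', Matrix.cons_val_fin_one, Matrix.head_fin_const,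
    Matrix.cons_val_two, Matrix.tail_cons]
  fin_cases i <;> fin_cases j <;> ring
end

section
/- Let T : Fin 3 × Fin 3 × Fin 3 → ℂ be a sum of at most 4 rank-one tensors, with slices A=(T(i,j,1)), B=(T(i,j,2)), C=(T(i,j,3)), and suppose det B ≠ 0. Then det(A · B⁻¹ · C − C · B⁻¹ · A) = 0. -/
/-!
Write the rank-four tensor as `A = U diag(a) V`, `B = U diag(b) V`, `C = U diag(c) V` with
`U : 3 × 4` and `V : 4 × 3`. If every `b i` is nonzero, put `W = U diag(b)` and `Z = V B⁻¹`, so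
that `W Z = 1` and `A B⁻¹ = W diag(a/b) Z`, `C B⁻¹ = W diag(c/b) Z` are compressions of two
commuting `4 × 4` matrices. Since `Q = 1 - Z W` has rank at most `4 - 3 = 1`, the commutator of
these compressions, `W (E Q D - D Q E) Z`, has rank at most `2 < 3`. The case of arbitrary `b`
follows by replacing `b` with `b + t`: after clearing `B⁻¹` by the adjugate, the determinant is a
polynomial in `t` that vanishes for all but finitely many `t`.
-/

open Matrix Polynomial

theorem Polynomial.eq_zero_of_eval_eq_zero_of_eval_ne_zero {R : Type*} [CommRing R] [IsDomain R]
    [Infinite R] {p q : R[X]} (hq : q ≠ 0) (h : ∀ t, q.eval t ≠ 0 → p.eval t = 0) : p = 0 := by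
  have hpq : p * q = 0 := Polynomial.funext fun t => by
    by_cases ht : q.eval t = 0 <;> simp [ht, h]
  exact (mul_eq_zero.1 hpq).resolve_right hq

theorem Matrix.eval_det_commutator_adjugate {R n : Type*} [CommRing R] [Fintype n]
    [DecidableEq n] (A C : Matrix n n R) (P : Matrix n n R[X]) (t : R) :
    (A.map Polynomial.C * P.adjugate * C.map Polynomial.C -
        C.map Polynomial.C * P.adjugate * A.map Polynomial.C).det.eval t =
      (A * (P.map (evalRingHom t)).adjugate * C - C * (P.map (evalRingHom t)).adjugate * A).det := by
  have hconst : ∀ M : Matrix n n R, (M.map Polynomial.C).map (evalRingHom t) = M := fun M => by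
    ext; simp
  rw [← coe_evalRingHom, RingHom.map_det, RingHom.mapMatrix_apply, Matrix.map_sub _ (map_sub _),
    Matrix.map_mul, Matrix.map_mul, Matrix.map_mul, Matrix.map_mul, hconst, hconst,
    ← RingHom.mapMatrix_apply, RingHom.map_adjugate]
  rfl

namespace Matrix

variable {K : Type*} [Field K] {l m n : Type*} [Fintype m] [Fintype n]

theorem rank_add_le (M N : Matrix l n K) : (M + N).rank ≤ M.rank + N.rank := by
  rw [rank, rank, rank, mulVecLin_add]
  exact (Submodule.finrank_mono (LinearMap.range_add_le _ _)).trans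
    (Submodule.finrank_add_le_finrank_add_finrank _ _)

variable [DecidableEq m] [DecidableEq n]

theorem det_eq_zero_of_rank_lt {M : Matrix n n K} (h : M.rank < Fintype.card n) : M.det = 0 := by
  contrapose! h
  exact (rank_of_det_ne_zero h).ge

theorem rank_one_sub_mul_le_of_mul_eq_one {W : Matrix n m K} {Z : Matrix m n K} (h : W * Z = 1) :
    (1 - Z * W).rank ≤ Fintype.card m - Fintype.card n := by
  have hW : W.rank = Fintype.card n :=
    le_antisymm W.rank_le_card_height (by simpa [h, rank_one] using rank_mul_le_left W Z)
  have hWQ : W * (1 - Z * W) = 0 := by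
    rw [Matrix.mul_sub, ← Matrix.mul_assoc, h, Matrix.one_mul, Matrix.mul_one, sub_self]
  have := rank_add_rank_le_card_of_mul_eq_zero hWQ
  omega

theorem rank_commutator_compressions_le {W : Matrix n m K} {Z : Matrix m n K} (h : W * Z = 1)
    {D E : Matrix m m K} (hDE : Commute D E) :
    (W * D * Z * (W * E * Z) - W * E * Z * (W * D * Z)).rank ≤
      2 * (Fintype.card m - Fintype.card n) := by
  set Q := 1 - Z * W with hQ
  have hcompress : ∀ F G : Matrix m m K,
      W * F * Z * (W * G * Z) = W * (F * G - F * Q * G) * Z := by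
    intro F G
    simp only [hQ, Matrix.mul_sub, Matrix.sub_mul, Matrix.mul_one, Matrix.mul_assoc, sub_sub_cancel]
  have hQ_le : Q.rank ≤ Fintype.card m - Fintype.card n := rank_one_sub_mul_le_of_mul_eq_one h
  have hsandwich_le : ∀ F G : Matrix m m K, (F * Q * G).rank ≤ Q.rank := fun F G =>
    (rank_mul_le_left _ _).trans (rank_mul_le_right _ _)
  rw [hcompress, hcompress, hDE.eq, ← Matrix.sub_mul, ← Matrix.mul_sub, sub_sub_sub_cancel_left,
    sub_eq_add_neg, ← Matrix.neg_mul, ← Matrix.neg_mul]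
  calc _ ≤ (E * Q * D + -D * Q * E).rank := (rank_mul_le_left _ _).trans (rank_mul_le_right _ _)
    _ ≤ (E * Q * D).rank + (-D * Q * E).rank := rank_add_le _ _
    _ ≤ _ := by have := hsandwich_le E D; have := hsandwich_le (-D) E; omega

variable {U : Matrix n m K} {V : Matrix m n K} {a b c : m → K} {A B C : Matrix n n K}

theorem det_commutator_eq_zero_of_ne_zero (hA : A = U * diagonal a * V)
    (hB : B = U * diagonal b * V) (hC : C = U * diagonal c * V) (hb : ∀ i, b i ≠ 0)
    (hdet : B.det ≠ 0) (hcard : 2 * (Fintype.card m - Fintype.card n) < Fintype.card n) :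
    (A * B⁻¹ * C - C * B⁻¹ * A).det = 0 := by
  set W := U * diagonal b
  set Z := V * B⁻¹
  have hWZ : W * Z = 1 := by
    rw [← Matrix.mul_assoc, ← hB]
    exact mul_nonsing_inv B hdet.isUnit
  have hcompress : ∀ d, U * diagonal d * V * B⁻¹ = W * diagonal (d / b) * Z := by
    intro d
    have hd : d = fun i => b i * (d / b) i := funext fun i => (mul_div_cancel₀ (d i) (hb i)).symm
    conv_lhs => rw [hd, ← diagonal_mul_diagonal]
    simp only [W, Z, Matrix.mul_assoc]
  have hfactor : A * B⁻¹ * C - C * B⁻¹ * A =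
      (A * B⁻¹ * (C * B⁻¹) - C * B⁻¹ * (A * B⁻¹)) * B := by
    simp only [Matrix.sub_mul, Matrix.mul_assoc, nonsing_inv_mul B hdet.isUnit, Matrix.mul_one]
  rw [hfactor, det_mul, hA, hC, hcompress, hcompress, det_eq_zero_of_rank_lt
    ((rank_commutator_compressions_le hWZ (commute_diagonal _ _)).trans_lt hcard), zero_mul]

theorem det_commutator_adjugate (A C : Matrix n n K) (hdet : B.det ≠ 0) :
    (A * B.adjugate * C - C * B.adjugate * A).det =
      B.det ^ Fintype.card n * (A * B⁻¹ * C - C * B⁻¹ * A).det := by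
  have hadj : B.adjugate = B.det • B⁻¹ := by
    rw [inv_def, Ring.inverse_eq_inv', smul_smul, mul_inv_cancel₀ hdet, one_smul]
  rw [hadj, ← det_smul]
  simp only [Matrix.mul_smul, Matrix.smul_mul, smul_sub]

theorem det_commutator_eq_zero [Infinite K] (hA : A = U * diagonal a * V)
    (hB : B = U * diagonal b * V) (hC : C = U * diagonal c * V) (hdet : B.det ≠ 0)
    (hcard : 2 * (Fintype.card m - Fintype.card n) < Fintype.card n) :
    (A * B⁻¹ * C - C * B⁻¹ * A).det = 0 := by
  set Bt := U.map Polynomial.C * diagonal (fun i => Polynomial.C (b i) + X) * V.map Polynomial.C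
  set p := (A.map Polynomial.C * Bt.adjugate * C.map Polynomial.C -
    C.map Polynomial.C * Bt.adjugate * A.map Polynomial.C).det
  set q := Bt.det * ∏ i, (X + Polynomial.C (b i))
  have hBt : ∀ t, Bt.map (evalRingHom t) = U * diagonal (fun i => b i + t) * V := by
    intro t
    rw [Matrix.map_mul, Matrix.map_mul, diagonal_map (map_zero _), Matrix.map_map, Matrix.map_map]
    simp [Function.comp_def]
  have hBt_det : ∀ t, Bt.det.eval t = (U * diagonal (fun i => b i + t) * V).det := by
    intro t
    rw [← coe_evalRingHom, RingHom.map_det, RingHom.mapMatrix_apply, hBt]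
  have hp_eval : ∀ t, p.eval t = (A * (U * diagonal (fun i => b i + t) * V).adjugate * C -
      C * (U * diagonal (fun i => b i + t) * V).adjugate * A).det := fun t => by
    rw [eval_det_commutator_adjugate, hBt]
  have hq : q ≠ 0 := by
    refine mul_ne_zero (fun h => hdet ?_) (Finset.prod_ne_zero_iff.2 fun i _ => X_add_C_ne_zero _)
    simpa [h, hB] using (hBt_det 0).symm
  have hp : p = 0 := by
    refine eq_zero_of_eval_eq_zero_of_eval_ne_zero hq fun t ht => ?_
    simp only [q, eval_mul, eval_prod, eval_add, eval_X, eval_C, mul_ne_zero_iff,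
      Finset.prod_ne_zero_iff, Finset.mem_univ, true_implies, hBt_det] at ht
    rw [hp_eval, det_commutator_adjugate _ _ ht.1, det_commutator_eq_zero_of_ne_zero hA rfl hC
      (fun i => by rw [add_comm]; exact ht.2 i) ht.1 hcard, mul_zero]
  have h0 := hp_eval 0
  simp only [hp, add_zero, eval_zero, ← hB] at h0
  rw [det_commutator_adjugate _ _ hdet] at h0
  exact (mul_eq_zero.1 h0.symm).resolve_left (pow_ne_zero _ hdet)

end Matrix

/-- Strassen's degree-nine equation for the fourth secant variety of
`ℙ² × ℙ² × ℙ²`: if a `3 × 3 × 3` complex tensor `T` is a sum of at most four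
rank-one tensors, and its middle slice `B` is invertible, then
`det(A·B⁻¹·C − C·B⁻¹·A) = 0`. -/
theorem strassen_rank_four (T : Fin 3 × Fin 3 × Fin 3 → ℂ)
    (x y z : Fin 4 → Fin 3 → ℂ)
    (hT : ∀ i j k, T (i, j, k) = ∑ m : Fin 4, x m i * y m j * z m k)
    (A B C : Matrix (Fin 3) (Fin 3) ℂ)
    (hA : ∀ i j, A i j = T (i, j, 0))
    (hB : ∀ i j, B i j = T (i, j, 1))
    (hC : ∀ i j, C i j = T (i, j, 2))
    (hdet : B.det ≠ 0) :
    (A * B⁻¹ * C - C * B⁻¹ * A).det = 0 := by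
  have hslice : ∀ (M : Matrix (Fin 3) (Fin 3) ℂ) k, (∀ i j, M i j = T (i, j, k)) →
      M = of (fun i m => x m i) * diagonal (fun m => z m k) * of (fun m j => y m j) := by
    intro M k hM
    ext i j
    rw [hM, hT, mul_apply]
    simp only [mul_diagonal, of_apply]
    exact Finset.sum_congr rfl fun m _ => by ring
  exact det_commutator_eq_zero (hslice A 0 hA) (hslice B 1 hB) (hslice C 2 hC) hdet (by simp)
end

section
/- Let T : Fin 2 × Fin 2 × Fin 2 × Fin 2 → ℂ. Form the three 4×4 flattenings M₁₂ (rows indexed by (i,j), columns by (k,l)), M₁₃ (rows by (i,k), columns by (j,l)), M₁₄ (rows by (i,l), columns by (j,k)). Then there exist signs ε₁, ε₂, ε₃ ∈ {−1,1} such that ε₁ det M₁₂ + ε₂ det M₁₃ + ε₃ det M₁₄ = 0 identically in the entries of T. -/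
def e4 : Fin 4 ≃ Fin 2 × Fin 2 :=
  ⟨![(0,0),(0,1),(1,0),(1,1)], fun p => ![![0,1],![2,3]] p.1 p.2,
   by decide, by decide⟩

theorem det_via_e4 (M : Matrix (Fin 2 × Fin 2) (Fin 2 × Fin 2) ℂ) :
    M.det = (M.submatrix e4 e4).det :=
  (Matrix.det_submatrix_equiv_self e4 M).symm

set_option maxHeartbeats 1000000 in
theorem my_det_fin_four (M : Matrix (Fin 4) (Fin 4) ℂ) :
    M.det =
      M 0 0 * (M 1 1 * (M 2 2 * M 3 3 - M 2 3 * M 3 2)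
        - M 1 2 * (M 2 1 * M 3 3 - M 2 3 * M 3 1)
        + M 1 3 * (M 2 1 * M 3 2 - M 2 2 * M 3 1))
      - M 0 1 * (M 1 0 * (M 2 2 * M 3 3 - M 2 3 * M 3 2)
        - M 1 2 * (M 2 0 * M 3 3 - M 2 3 * M 3 0)
        + M 1 3 * (M 2 0 * M 3 2 - M 2 2 * M 3 0))
      + M 0 2 * (M 1 0 * (M 2 1 * M 3 3 - M 2 3 * M 3 1)
        - M 1 1 * (M 2 0 * M 3 3 - M 2 3 * M 3 0)
        + M 1 3 * (M 2 0 * M 3 1 - M 2 1 * M 3 0))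
      - M 0 3 * (M 1 0 * (M 2 1 * M 3 2 - M 2 2 * M 3 1)
        - M 1 1 * (M 2 0 * M 3 2 - M 2 2 * M 3 0)
        + M 1 2 * (M 2 0 * M 3 1 - M 2 1 * M 3 0)) := by
  rw [Matrix.det_succ_row_zero]
  simp only [Fin.sum_univ_succ, Fin.sum_univ_zero, Matrix.det_fin_three,
    Matrix.submatrix_apply, Fin.succAbove]
  norm_num [Fin.lt_def]
  simp only [show (Fin.succ 2 : Fin 4) = 3 from rfl,
    show (Fin.castSucc 2 : Fin 4) = 2 from rfl]
  ring

/-- For a `2 × 2 × 2 × 2` tensor, the determinants of the three `4 × 4`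
flattenings satisfy a signed linear relation, identically in the entries. -/
theorem flattening_determinant_relation :
    ∃ ε₁ ε₂ ε₃ : ℂ, (ε₁ = 1 ∨ ε₁ = -1) ∧ (ε₂ = 1 ∨ ε₂ = -1) ∧
      (ε₃ = 1 ∨ ε₃ = -1) ∧
      ∀ T : Fin 2 × Fin 2 × Fin 2 × Fin 2 → ℂ,
        ε₁ * (Matrix.of fun (ij kl : Fin 2 × Fin 2) =>
            T (ij.1, ij.2, kl.1, kl.2)).det +
        ε₂ * (Matrix.of fun (ik jl : Fin 2 × Fin 2) =>
            T (ik.1, jl.1, ik.2, jl.2)).det +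
        ε₃ * (Matrix.of fun (il jk : Fin 2 × Fin 2) =>
            T (il.1, jk.1, jk.2, il.2)).det = 0 := by
  refine ⟨1, -1, 1, Or.inl rfl, Or.inr rfl, Or.inl rfl, fun T => ?_⟩
  rw [det_via_e4, det_via_e4, det_via_e4, my_det_fin_four, my_det_fin_four,
    my_det_fin_four]
  simp only [Matrix.submatrix_apply, Matrix.of_apply, e4, Equiv.coe_fn_mk,
    Matrix.cons_val_zero, Matrix.cons_val_one, Matrix.head_cons,
    Matrix.cons_val_two, Matrix.tail_cons, Matrix.cons_val_three]
  ring
end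

section
/- Let J be an ideal of k[x₁,…,xₙ] containing f = g·x₁ + h with g, h ∈ k[x₂,…,xₙ], and suppose g is a nonzerodivisor modulo J. Let J₁ = J ∩ k[x₂,…,xₙ]. Then J is prime if and only if J₁ is prime. -/
/-- Birational projection, primality transfer: if an ideal `J` of
`k[x₁,…,xₙ] = (k[x₂,…,xₙ])[x₁]` contains `g·x₁ + h` with `g, h` not
involving `x₁` and `g` a nonzerodivisor modulo `J`, then `J` is prime iff the
elimination ideal `J₁ = J ∩ k[x₂,…,xₙ]` is prime. -/
theorem birational_projection_prime {k : Type*} [Field k] (n : ℕ)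
    (J : Ideal (Polynomial (MvPolynomial (Fin n) k)))
    (g h : MvPolynomial (Fin n) k)
    (hf : Polynomial.C g * Polynomial.X + Polynomial.C h ∈ J)
    (hnzd : ∀ p, Polynomial.C g * p ∈ J → p ∈ J) :
    J.IsPrime ↔
      (J.comap (Polynomial.C :
        MvPolynomial (Fin n) k →+* Polynomial (MvPolynomial (Fin n) k))).IsPrime := by
  set Q := Ideal.Quotient.mk J with hQ
  constructor
  · intro hJ
    exact hJ.comap _
  · intro hJ1
    have hx : Q (Polynomial.C g * Polynomial.X) = Q (Polynomial.C (-h)) := by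
      rw [Ideal.Quotient.mk_eq_mk_iff_sub_mem, map_neg, sub_neg_eq_add]
      exact hf
    -- key: g^d * p ≡ a constant mod J
    have key : ∀ (p : Polynomial (MvPolynomial (Fin n) k)) (d : ℕ), p.natDegree < d →
        Q (Polynomial.C g ^ d * p) =
          Q (Polynomial.C (∑ i ∈ Finset.range d, p.coeff i * g ^ (d - i) * (-h) ^ i)) := by
      intro p d hd
      conv_lhs => rw [Polynomial.as_sum_range' p d hd]
      rw [Finset.mul_sum, map_sum, map_sum Polynomial.C, map_sum Q]
      apply Finset.sum_congr rfl
      intro i hi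
      have hi' : i < d := Finset.mem_range.mp hi
      have hsplit : d = (d - i) + i := (Nat.sub_add_cancel hi'.le).symm
      rw [← Polynomial.C_mul_X_pow_eq_monomial]
      have hpoly : Polynomial.C g ^ d * (Polynomial.C (p.coeff i) * Polynomial.X ^ i) =
          (Polynomial.C (p.coeff i) * Polynomial.C g ^ (d - i)) *
            (Polynomial.C g * Polynomial.X) ^ i := by
        conv_lhs => rw [hsplit]
        rw [pow_add, mul_pow]; ring
      calc Q (Polynomial.C g ^ d * (Polynomial.C (p.coeff i) * Polynomial.X ^ i))
          = Q (Polynomial.C (p.coeff i) * Polynomial.C g ^ (d - i)) *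
              (Q (Polynomial.C g * Polynomial.X)) ^ i := by
              rw [hpoly, map_mul, map_pow]
        _ = Q (Polynomial.C (p.coeff i) * Polynomial.C g ^ (d - i)) *
              (Q (Polynomial.C (-h))) ^ i := by rw [hx]
        _ = Q (Polynomial.C (p.coeff i * g ^ (d - i) * (-h) ^ i)) := by
              rw [Polynomial.C_mul, Polynomial.C_mul, Polynomial.C_pow,
                Polynomial.C_pow, map_mul, map_mul, map_pow, map_pow, map_mul, map_pow]
    -- iterate the nonzerodivisor hypothesis
    have hnzd' : ∀ (m : ℕ) (p : Polynomial (MvPolynomial (Fin n) k)),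
        Polynomial.C g ^ m * p ∈ J → p ∈ J := by
      intro m
      induction m with
      | zero => intro p hp; simpa using hp
      | succ m ih =>
        intro p hp
        apply hnzd
        apply ih
        rw [← mul_assoc, ← pow_succ]
        exact hp
    constructor
    · intro htop
      apply hJ1.ne_top
      rw [Ideal.eq_top_iff_one, Ideal.mem_comap, map_one, ← Ideal.eq_top_iff_one]
      exact htop
    · intro p q hpq
      set dp := p.natDegree + 1
      set dq := q.natDegree + 1
      set rp := ∑ i ∈ Finset.range dp, p.coeff i * g ^ (dp - i) * (-h) ^ i with hrp
      set rq := ∑ i ∈ Finset.range dq, q.coeff i * g ^ (dq - i) * (-h) ^ i with hrq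
      have hp := key p dp (Nat.lt_succ_self _)
      have hq := key q dq (Nat.lt_succ_self _)
      have hmem : Polynomial.C (rp * rq) ∈ J := by
        rw [← Ideal.Quotient.eq_zero_iff_mem]
        show Q (Polynomial.C (rp * rq)) = 0
        rw [map_mul Polynomial.C, map_mul Q, ← hp, ← hq, ← map_mul Q,
          Ideal.Quotient.eq_zero_iff_mem]
        have : Polynomial.C g ^ dp * p * (Polynomial.C g ^ dq * q) =
            Polynomial.C g ^ dp * Polynomial.C g ^ dq * (p * q) := by ring
        rw [this]
        exact J.mul_mem_left _ hpq
      have hmem' : rp * rq ∈ J.comap (Polynomial.C :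
          MvPolynomial (Fin n) k →+* Polynomial (MvPolynomial (Fin n) k)) := hmem
      rcases hJ1.mem_or_mem hmem' with hr | hr
      · left
        apply hnzd' dp
        have hCr : Polynomial.C rp ∈ J := hr
        have hsub : Polynomial.C g ^ dp * p - Polynomial.C rp ∈ J := by
          rw [← Ideal.Quotient.mk_eq_mk_iff_sub_mem]; exact hp
        simpa using J.add_mem hsub hCr
      · right
        apply hnzd' dq
        have hCr : Polynomial.C rq ∈ J := hr
        have hsub : Polynomial.C g ^ dq * q - Polynomial.C rq ∈ J := by
          rw [← Ideal.Quotient.mk_eq_mk_iff_sub_mem]; exact hq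
        simpa using J.add_mem hsub hCr
end

section
/- Let J be an ideal of k[x₁,…,xₙ] containing f = g·x₁ + h with g, h ∈ k[x₂,…,xₙ] and g a nonzerodivisor modulo J, and let J₁ = J ∩ k[x₂,…,xₙ]. Then J equals the saturation (⟨J₁, g·x₁ + h⟩ : g^∞). -/
/-!
Modulo `f = g·X + h` we have `g·X ≡ -h`, so multiplying any `p ∈ R[X]` by a power of `g`
makes it congruent to a constant `q`. If `p ∈ J` then `q ∈ J ∩ R`, hence `g^m p ∈ ⟨f, J ∩ R⟩`.
Conversely `⟨f, J ∩ R⟩ ⊆ J`, and `g` being a nonzerodivisor modulo `J` makes `J` saturated.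
-/

/-- The saturation `(I : g^∞) = {a | ∃ m, g^m · a ∈ I}` of an ideal. -/
def Ideal.sat {R : Type*} [CommRing R] (I : Ideal R) (g : R) : Ideal R where
  carrier := {a | ∃ m : ℕ, g ^ m * a ∈ I}
  zero_mem' := ⟨0, by simp⟩
  add_mem' := by
    rintro a b ⟨m, hm⟩ ⟨l, hl⟩
    refine ⟨m + l, ?_⟩
    rw [mul_add]
    exact I.add_mem
      (by rw [pow_add, mul_comm (g ^ m) (g ^ l), mul_assoc]; exact I.mul_mem_left _ hm)
      (by rw [pow_add, mul_assoc]; exact I.mul_mem_left _ hl)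
  smul_mem' := by
    rintro c a ⟨m, hm⟩
    exact ⟨m, by rw [smul_eq_mul, mul_left_comm]; exact I.mul_mem_left _ hm⟩

namespace Ideal

variable {R : Type*} [CommRing R]

theorem mem_of_pow_mul_mem {J : Ideal R} {a : R} (ha : ∀ p, a * p ∈ J → p ∈ J) :
    ∀ (m : ℕ) (p : R), a ^ m * p ∈ J → p ∈ J
  | 0, p, hp => by simpa using hp
  | m + 1, p, hp => mem_of_pow_mul_mem ha m p (ha _ (by rwa [← mul_assoc, ← pow_succ']))

theorem sat_le {I J : Ideal R} {a : R} (hIJ : I ≤ J) (ha : ∀ p, a * p ∈ J → p ∈ J) :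
    I.sat a ≤ J := by
  rintro p ⟨m, hm⟩
  exact mem_of_pow_mul_mem ha m p (hIJ hm)

end Ideal

namespace Polynomial

variable {R : Type*} [CommRing R]

theorem C_mul_X_add_C_dvd_C_pow_mul_monomial_sub (g h a : R) (i : ℕ) :
    C g * X + C h ∣ C g ^ i * monomial i a - C (a * (-h) ^ i) := by
  have hsplit : C g ^ i * monomial i a - C (a * (-h) ^ i) =
      C a * ((C g * X) ^ i - (-C h) ^ i) := by
    rw [← C_mul_X_pow_eq_monomial]
    simp only [map_mul, map_pow, map_neg]
    ring
  rw [hsplit]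
  simpa only [sub_neg_eq_add] using (sub_dvd_pow_sub_pow (C g * X) (-C h) i).mul_left (C a)

theorem exists_C_pow_mul_sub_C_mem_span (g h : R) (p : R[X]) :
    ∃ (m : ℕ) (q : R), C g ^ m * p - C q ∈ Ideal.span {C g * X + C h} := by
  induction p using Polynomial.induction_on' with
  | add p r hp hr =>
    obtain ⟨m₁, q₁, h₁⟩ := hp
    obtain ⟨m₂, q₂, h₂⟩ := hr
    refine ⟨m₁ + m₂, g ^ m₂ * q₁ + g ^ m₁ * q₂, ?_⟩
    have hsplit : C g ^ (m₁ + m₂) * (p + r) - C (g ^ m₂ * q₁ + g ^ m₁ * q₂) =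
        C g ^ m₂ * (C g ^ m₁ * p - C q₁) + C g ^ m₁ * (C g ^ m₂ * r - C q₂) := by
      simp only [map_add, map_mul, map_pow]
      ring
    rw [hsplit]
    exact Ideal.add_mem _ (Ideal.mul_mem_left _ _ h₁) (Ideal.mul_mem_left _ _ h₂)
  | monomial i a =>
    exact ⟨i, a * (-h) ^ i,
      Ideal.mem_span_singleton.mpr (C_mul_X_add_C_dvd_C_pow_mul_monomial_sub g h a i)⟩

end Polynomial

/-- Birational projection, part (a): under the same hypotheses as the
primality transfer, `J = (⟨J₁, g·x₁ + h⟩ : g^∞)` where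
`J₁ = J ∩ k[x₂,…,xₙ]` is the elimination ideal. -/
theorem birational_projection_saturation {k : Type*} [Field k] (n : ℕ)
    (J : Ideal (Polynomial (MvPolynomial (Fin n) k)))
    (g h : MvPolynomial (Fin n) k)
    (hf : Polynomial.C g * Polynomial.X + Polynomial.C h ∈ J)
    (hnzd : ∀ p, Polynomial.C g * p ∈ J → p ∈ J) :
    J = (Ideal.span {Polynomial.C g * Polynomial.X + Polynomial.C h} ⊔
          Ideal.map (Polynomial.C :
            MvPolynomial (Fin n) k →+* Polynomial (MvPolynomial (Fin n) k))
            (J.comap (Polynomial.C :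
              MvPolynomial (Fin n) k →+* Polynomial (MvPolynomial (Fin n) k)))).sat
        (Polynomial.C g) := by
  open Polynomial in
  have hspan : Ideal.span {C g * X + C h} ≤ J := (Ideal.span_singleton_le_iff_mem J).mpr hf
  refine le_antisymm (fun p hp => ?_) (Ideal.sat_le (sup_le hspan Ideal.map_comap_le) hnzd)
  obtain ⟨m, q, hmq⟩ := exists_C_pow_mul_sub_C_mem_span g h p
  have hq : C q ∈ J := by
    simpa using J.sub_mem (J.mul_mem_left (C g ^ m) hp) (hspan hmq)
  refine ⟨m, ?_⟩
  simpa using Ideal.add_mem _ (Ideal.mem_sup_left hmq)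
    (Ideal.mem_sup_right (Ideal.mem_map_of_mem C (Ideal.mem_comap.mpr hq)))
end

section
/- For any ideal I of a commutative Noetherian ring and any elements f₁, f₂ with f = f₁·f₂ ∈ I, the radical of I equals the intersection of the radical of I + (f₁) with the radical of the saturation ((I + (f₂)) : f₁^∞). -/
/-!
Both radicals contain `√I`. Conversely, `√I` is the intersection of the primes `P ⊇ I`, and each
such `P` contains `f₁` or `f₂`. If `f₁ ∈ P` then `I + (f₁) ⊆ P`. Otherwise `f₂ ∈ P`, so
`I + (f₂) ⊆ P`, and since `f₁ ∉ P` the saturation at `f₁` stays inside the prime `P`.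
-/

namespace Ideal

variable {R : Type*} [CommRing R]

theorem le_sat (I : Ideal R) (g : R) : I ≤ I.sat g :=
  fun a ha => ⟨0, by simpa using ha⟩

theorem IsPrime.sat_le {I P : Ideal R} {g : R} (hP : P.IsPrime) (hIP : I ≤ P) (hg : g ∉ P) :
    I.sat g ≤ P := by
  rintro a ⟨m, hm⟩
  exact (hP.mem_or_mem (hIP hm)).resolve_left fun hgm => hg (hP.mem_of_pow_mem m hgm)

end Ideal

open Ideal

theorem radical_splitting_general {R : Type*} [CommRing R]
    (I : Ideal R) (f₁ f₂ : R) (hf : f₁ * f₂ ∈ I) :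
    I.radical =
      (I ⊔ Ideal.span {f₁}).radical ⊓
        ((I ⊔ Ideal.span {f₂}).sat f₁).radical := by
  refine le_antisymm
    (le_inf (radical_mono le_sup_left) (radical_mono (le_sup_left.trans (le_sat _ _)))) ?_
  rw [radical_eq_sInf I]
  refine le_sInf fun P ⟨hIP, hP⟩ => ?_
  by_cases h₁ : f₁ ∈ P
  · have h₁P : I ⊔ span {f₁} ≤ P := sup_le hIP ((span_singleton_le_iff_mem P).mpr h₁)
    exact inf_le_left.trans (hP.radical_le_iff.mpr h₁P)
  · have h₂ : f₂ ∈ P := (hP.mem_or_mem (hIP hf)).resolve_left h₁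
    have h₂P : I ⊔ span {f₂} ≤ P := sup_le hIP ((span_singleton_le_iff_mem P).mpr h₂)
    exact inf_le_right.trans (hP.radical_le_iff.mpr (hP.sat_le h₂P h₁))

/-- Splitting a radical at a factorization `f = f₁·f₂ ∈ I`:
`√I = √(I + (f₁)) ∩ √((I + (f₂)) : f₁^∞)`. -/
theorem radical_splitting {R : Type*} [CommRing R] [IsNoetherianRing R]
    (I : Ideal R) (f₁ f₂ : R) (hf : f₁ * f₂ ∈ I) :
    I.radical =
      (I ⊔ Ideal.span {f₁}).radical ⊓
        ((I ⊔ Ideal.span {f₂}).sat f₁).radical :=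
  radical_splitting_general I f₁ f₂ hf
end

section
/- Let p : Fin d1 × Fin d2 × Fin d3 → ℂ be a nonzero table such that (i) for each fixed j ∈ Fin d2, the matrix (i,k) ↦ p(i,j,k) has rank at most 1 (encoding 1 ⫫ 3 | 2) and (ii) the marginal matrix (j,k) ↦ ∑_i p(i,j,k) has rank at most 1 (encoding 2 ⫫ 3), with all marginals ∑_i p(i,j,k) nonzero. Then p factors: there exist functions a : Fin d1 × Fin d2 → ℂ and b : Fin d2 × Fin d3 → ℂ such that p(i,j,k) = a(i,j)·b(j,k) for all i,j,k. -/
/-- A matrix of rank at most one decomposes as an outer product. -/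
lemma rank_le_one_outer {m n : ℕ} (M : Matrix (Fin m) (Fin n) ℂ)
    (h : M.rank ≤ 1) : ∃ (v : Fin m → ℂ) (t : Fin n → ℂ),
      ∀ i k, M i k = t k * v i := by
  rw [Matrix.rank_eq_finrank_span_cols] at h
  set W := Submodule.span ℂ (Set.range M.transpose)
  obtain ⟨v, hv⟩ := (finrank_le_one_iff (K := ℂ) (V := W)).mp h
  choose t ht using fun k =>
    hv ⟨M.transpose k, Submodule.subset_span (Set.mem_range_self k)⟩
  refine ⟨v.1, t, fun i k => ?_⟩
  have := congrArg (fun (w : W) => (w : Fin m → ℂ) i) (ht k)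
  simpa [Matrix.transpose_apply, mul_comm] using this.symm

/-- Away from the locus where a marginal vanishes, a complex table satisfying
the local Markov statements `1 ⫫ 3 | 2` and `2 ⫫ 3` of the chain
`3 → 2 → 1` admits a recursive factorization `p(i,j,k) = a(i,j)·b(j,k)`. -/
theorem chain_factorization (d1 d2 d3 : ℕ)
    (p : Fin d1 × Fin d2 × Fin d3 → ℂ) (hp : p ≠ 0)
    (h13 : ∀ j : Fin d2,
      (Matrix.of fun (i : Fin d1) (k : Fin d3) => p (i, j, k)).rank ≤ 1)
    (h23 : (Matrix.of fun (j : Fin d2) (k : Fin d3) =>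
      ∑ i : Fin d1, p (i, j, k)).rank ≤ 1)
    (hnz : ∀ (j : Fin d2) (k : Fin d3), (∑ i, p (i, j, k)) ≠ 0) :
    ∃ (a : Fin d1 × Fin d2 → ℂ) (b : Fin d2 × Fin d3 → ℂ),
      ∀ i j k, p (i, j, k) = a (i, j) * b (j, k) := by
  choose v t hvt using fun j => rank_le_one_outer _ (h13 j)
  simp only [Matrix.of_apply] at hvt
  refine ⟨fun x => v x.2 x.1 / (∑ i, v x.2 i),
    fun x => ∑ i, p (i, x.1, x.2), fun i j k => ?_⟩
  have hsum : ∀ k, (∑ i, p (i, j, k)) = t j k * ∑ i, v j i := by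
    intro k
    rw [Finset.mul_sum]
    exact Finset.sum_congr rfl fun i _ => hvt j i k
  have hS : (∑ i, v j i) ≠ 0 := by
    intro h0
    exact hnz j k (by rw [hsum, h0, mul_zero])
  simp only [hvt j i k, hsum k]
  field_simp
end
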